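/- Let I ⊆ ℝ be an open interval, m₁, m₂, m₃ ∈ ℝ, and let (ξ₁, ξ₂, ξ₃) : I → (ℝ²)³ be a differentiable solution of the 3-vortex Kirchhoff–Routh system with circulations m₁, m₂, m₃ such that ξ_i(t) ≠ ξ_j(t) for all i ≠ j and t ∈ I. Set L_{ij}(t) = |ξ_i(t) − ξ_j(t)| and let A(t) = (1/2) (ξ₂(t)−ξ₁(t)) ∧ (ξ₃(t)−ξ₁(t)) denote the signed area of the triangle, where u ∧ v = u₁v₂ − u₂v₁. Then for all t ∈ I: d/dt(L₁₂(t)²) = (2/π) m₃ A(t) (L₂₃(t)^{−2} − L₁₃(t)^{−2}), d/dt(L₂₃(t)²) = (2/π) m₁ A(t) (L₁₃(t)^{−2} − L₁₂(t)^{−2}), and d/dt(L₁₃(t)²) = (2/π) m₂ A(t) (L₁₂(t)^{−2} − L₂₃(t)^{−2}). -/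

import Mathlib

open Real Set

noncomputable section

abbrev E2 := EuclideanSpace ℝ (Fin 2)

/-- The point `(a, b) ∈ ℝ²`. -/
def mk2 (a b : ℝ) : E2 := (WithLp.equiv 2 (Fin 2 → ℝ)).symm ![a, b]

/-- `(z₁, z₂)^⊥ = (z₂, −z₁)`. -/
def perp (v : E2) : E2 := mk2 (v 1) (-(v 0))

/-- The wedge product `u ∧ v = u₁v₂ − u₂v₁`. -/
def wedge (u v : E2) : ℝ := u 0 * v 1 - u 1 * v 0

set_option maxHeartbeats 1000000

lemma deriv_norm_sq_sub {f g : ℝ → E2} {f' g' : E2} {t : ℝ}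
    (hf : HasDerivAt f f' t) (hg : HasDerivAt g g' t) :
    HasDerivAt (fun s => ‖f s - g s‖ ^ 2)
      (2 * (inner ℝ (f t - g t) (f' - g') : ℝ)) t := by
  have h := (hf.sub hg).inner ℝ (hf.sub hg)
  have heq : (fun s => ‖f s - g s‖ ^ 2) = fun s => (inner ℝ (f s - g s) (f s - g s) : ℝ) := by
    funext s; rw [real_inner_self_eq_norm_sq]
  rw [heq]
  convert h using 1
  · rfl
  · rfl
  · rfl
  · rw [Pi.sub_apply, real_inner_comm]; ring

/-- Evolution of the squared side lengths of the triangle formed by a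
nondegenerate solution of the 3-vortex Kirchhoff–Routh system. -/
theorem three_vortex_side_length_evolution
    (I : Set ℝ) (hIopen : IsOpen I) (hIconn : I.OrdConnected)
    (m : Fin 3 → ℝ) (ξ : Fin 3 → ℝ → E2)
    (hsep : ∀ t ∈ I, ∀ i j : Fin 3, i ≠ j → ξ i t ≠ ξ j t)
    (hKR : ∀ j : Fin 3, ∀ t ∈ I, HasDerivAt (ξ j)
      (-(∑ ℓ ∈ Finset.univ.erase j,
          (m ℓ / (2 * π * ‖ξ j t - ξ ℓ t‖ ^ 2)) • perp (ξ j t - ξ ℓ t))) t) :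
    ∀ t ∈ I,
      ∀ A : ℝ, A = (1 / 2) * wedge (ξ 1 t - ξ 0 t) (ξ 2 t - ξ 0 t) →
        HasDerivAt (fun s => ‖ξ 0 s - ξ 1 s‖ ^ 2)
          ((2 / π) * m 2 * A * ((‖ξ 1 t - ξ 2 t‖ ^ 2)⁻¹ - (‖ξ 0 t - ξ 2 t‖ ^ 2)⁻¹)) t ∧
        HasDerivAt (fun s => ‖ξ 1 s - ξ 2 s‖ ^ 2)
          ((2 / π) * m 0 * A * ((‖ξ 0 t - ξ 2 t‖ ^ 2)⁻¹ - (‖ξ 0 t - ξ 1 t‖ ^ 2)⁻¹)) t ∧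
        HasDerivAt (fun s => ‖ξ 0 s - ξ 2 s‖ ^ 2)
          ((2 / π) * m 1 * A * ((‖ξ 0 t - ξ 1 t‖ ^ 2)⁻¹ - (‖ξ 1 t - ξ 2 t‖ ^ 2)⁻¹)) t := by
  intro t ht A hA
  have hπ : (π : ℝ) ≠ 0 := Real.pi_ne_zero
  have hL01 : ‖ξ 0 t - ξ 1 t‖ ^ 2 ≠ 0 :=
    pow_ne_zero _ (norm_ne_zero_iff.2 (sub_ne_zero.2 (hsep t ht 0 1 (by decide))))
  have hL02 : ‖ξ 0 t - ξ 2 t‖ ^ 2 ≠ 0 :=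
    pow_ne_zero _ (norm_ne_zero_iff.2 (sub_ne_zero.2 (hsep t ht 0 2 (by decide))))
  have hL12 : ‖ξ 1 t - ξ 2 t‖ ^ 2 ≠ 0 :=
    pow_ne_zero _ (norm_ne_zero_iff.2 (sub_ne_zero.2 (hsep t ht 1 2 (by decide))))
  have e0 : (Finset.univ.erase (0 : Fin 3)) = {1, 2} := by decide
  have e1 : (Finset.univ.erase (1 : Fin 3)) = {0, 2} := by decide
  have e2 : (Finset.univ.erase (2 : Fin 3)) = {0, 1} := by decide
  have hns01 : ‖ξ 1 t - ξ 0 t‖ = ‖ξ 0 t - ξ 1 t‖ := norm_sub_rev _ _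
  have hns02 : ‖ξ 2 t - ξ 0 t‖ = ‖ξ 0 t - ξ 2 t‖ := norm_sub_rev _ _
  have hns12 : ‖ξ 2 t - ξ 1 t‖ = ‖ξ 1 t - ξ 2 t‖ := norm_sub_rev _ _
  refine ⟨?_, ?_, ?_⟩
  · have h := deriv_norm_sq_sub (hKR 0 t ht) (hKR 1 t ht)
    convert h using 1
    simp only [e0, e1, Finset.sum_pair (show (1:Fin 3) ≠ 2 by decide), Finset.sum_pair (show (0:Fin 3) ≠ 2 by decide), Finset.sum_pair (show (0:Fin 3) ≠ 1 by decide),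
      inner_sub_right, inner_neg_right, inner_add_right, real_inner_smul_right]
    simp only [hns01, hns02, hns12, hA, wedge, perp, mk2, PiLp.inner_apply,
      RCLike.inner_apply, conj_trivial, Fin.sum_univ_two, WithLp.equiv_symm_apply, PiLp.toLp_apply,
      Matrix.cons_val_zero, Matrix.cons_val_one, Matrix.head_cons, PiLp.sub_apply]
    field_simp
    ring
  · have h := deriv_norm_sq_sub (hKR 1 t ht) (hKR 2 t ht)
    convert h using 1
    simp only [e1, e2, Finset.sum_pair (show (1:Fin 3) ≠ 2 by decide), Finset.sum_pair (show (0:Fin 3) ≠ 2 by decide), Finset.sum_pair (show (0:Fin 3) ≠ 1 by decide),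
      inner_sub_right, inner_neg_right, inner_add_right, real_inner_smul_right]
    simp only [hns01, hns02, hns12, hA, wedge, perp, mk2, PiLp.inner_apply,
      RCLike.inner_apply, conj_trivial, Fin.sum_univ_two, WithLp.equiv_symm_apply, PiLp.toLp_apply,
      Matrix.cons_val_zero, Matrix.cons_val_one, Matrix.head_cons, PiLp.sub_apply]
    field_simp
    ring
  · have h := deriv_norm_sq_sub (hKR 0 t ht) (hKR 2 t ht)
    convert h using 1
    simp only [e0, e2, Finset.sum_pair (show (1:Fin 3) ≠ 2 by decide), Finset.sum_pair (show (0:Fin 3) ≠ 2 by decide), Finset.sum_pair (show (0:Fin 3) ≠ 1 by decide),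
      inner_sub_right, inner_neg_right, inner_add_right, real_inner_smul_right]
    simp only [hns01, hns02, hns12, hA, wedge, perp, mk2, PiLp.inner_apply,
      RCLike.inner_apply, conj_trivial, Fin.sum_univ_two, WithLp.equiv_symm_apply, PiLp.toLp_apply,
      Matrix.cons_val_zero, Matrix.cons_val_one, Matrix.head_cons, PiLp.sub_apply]
    field_simp
    ring

end
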